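/- Let Γ be a finite directed multigraph, let (T, r, β) be a rooted tree decomposition of Γ whose root bag is empty (β(r) = ∅), and for each vertex v let fb(v) denote its unique forget bag. Let W be a nonempty set of vertices of Γ that is connected in the underlying undirected multigraph, meaning that for any two vertices of W there is a sequence of vertices of W starting at one and ending at the other in which each consecutive pair is joined by some arc of Γ (in either direction). Then there exists a vertex w ∈ W such that for every v ∈ W, the node fb(w) lies on the unique path in T from r to fb(v). (This supports the footnote claim that any connected collection of arcs has the same minimum arc under all tree-based orderings.) -/

import Mathlib

/-!
Order the nodes of `T` by ancestry: `i ≼ j` when `i` lies on the path from `r` to `j`. The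
ancestors of a node form a chain, and the depth `dist r i` strictly increases along `≺`. The bags
containing a vertex `v` form a connected subtree whose top node is the forget bag `fb(v)`, so
`fb(v)` is an ancestor of every bag containing `v`.

Choose `w ∈ W` whose forget bag is as close to the root as possible. If `b` and `c` are joined by
an arc, some bag `k` contains both, so `fb(w) ≼ fb(b) ≼ k` and `fb(c) ≼ k` make `fb(w)` and
`fb(c)` comparable; by minimality of the depth of `fb(w)` this forces `fb(w) ≼ fb(c)`. Walking
along a path inside `W` from `w` gives `fb(w) ≼ fb(v)` for every `v ∈ W`.
-/

open SimpleGraph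

/-- `i` lies on the (unique) path in `T` from `r` to `j`. -/
def OnPath {I : Type*} (T : SimpleGraph I) (r i j : I) : Prop :=
  ∀ p : T.Walk r j, p.IsPath → i ∈ p.support

/-- `j` is a descendant of `i` in the tree `T` rooted at `r`:
`j ≠ i` and `i` lies on the unique path from `r` to `j`. -/
def Descendant {I : Type*} (T : SimpleGraph I) (r i j : I) : Prop :=
  j ≠ i ∧ OnPath T r i j

/-- `j` belongs to the subtree rooted at `i` (i.e. `j` is `i` or a descendant of `i`). -/
def InSubtree {I : Type*} (T : SimpleGraph I) (r i j : I) : Prop :=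
  j = i ∨ Descendant T r i j

/-- `p` is the parent of `i` in the tree `T` rooted at `r`:
a neighbour of `i` lying on the unique path from `r` to `i`. -/
def IsParent {I : Type*} (T : SimpleGraph I) (r p i : I) : Prop :=
  T.Adj p i ∧ OnPath T r p i

/-- `(T, β)` is a tree decomposition of the finite directed multigraph
with arcs `a : A` running from `src a` to `tgt a`. -/
structure IsTreeDecomp {V A I : Type*} (src tgt : A → V) (T : SimpleGraph I)
    (β : I → Finset V) : Prop where
  isTree : T.IsTree
  bagV : ∀ v : V, ∃ i : I, v ∈ β i
  bagA : ∀ a : A, ∃ i : I, src a ∈ β i ∧ tgt a ∈ β i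
  bagConn : ∀ v : V, (T.induce {i : I | v ∈ β i}).Connected

/-- The vertex `v` is current at the node `i`. -/
def Current {V I : Type*} (β : I → Finset V) (i : I) (v : V) : Prop :=
  v ∈ β i

/-- The vertex `v` is forgotten at the node `i`: it is not in `β i`, but lies in the
bag of some descendant of `i`. -/
def Forgotten {V I : Type*} (T : SimpleGraph I) (r : I) (β : I → Finset V)
    (i : I) (v : V) : Prop :=
  v ∉ β i ∧ ∃ j : I, Descendant T r i j ∧ v ∈ β j

/-- The vertex `v` is unvisited at the node `i`: it lies in no bag of the subtree
rooted at `i`. -/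
def Unvisited {V I : Type*} (T : SimpleGraph I) (r : I) (β : I → Finset V)
    (i : I) (v : V) : Prop :=
  ∀ j : I, InSubtree T r i j → v ∉ β j

/-- `i` is the forget bag of the vertex `v` (for a rooted tree decomposition whose
root bag is empty): `i ≠ r`, `v ∈ β i`, and `v` is not in the bag of the parent of `i`. -/
def IsForgetBag {V I : Type*} (T : SimpleGraph I) (r : I) (β : I → Finset V)
    (v : V) (i : I) : Prop :=
  i ≠ r ∧ v ∈ β i ∧ ∀ p : I, IsParent T r p i → v ∉ β p

/-- Two vertices are joined by some arc of the multigraph, in either direction. -/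
def JoinedByArc {V A : Type*} (src tgt : A → V) (u w : V) : Prop :=
  ∃ a : A, (src a = u ∧ tgt a = w) ∨ (src a = w ∧ tgt a = u)

theorem SimpleGraph.IsTree.length_eq_dist {I : Type*} {T : SimpleGraph I} (hT : T.IsTree)
    {u v : I} {p : T.Walk u v} (hp : p.IsPath) : p.length = T.dist u v := by
  obtain ⟨q, hq, hlen⟩ := hT.connected.exists_path_of_dist u v
  rw [(hT.existsUnique_path u v).unique hp hq, hlen]

section OnPath

variable {I : Type*} {T : SimpleGraph I} {r i j k : I}

theorem onPath_refl (T : SimpleGraph I) (r i : I) : OnPath T r i i :=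
  fun p _ => p.end_mem_support

theorem onPath_iff_mem_support (hT : T.IsTree) {p : T.Walk r j} (hp : p.IsPath) :
    OnPath T r i j ↔ i ∈ p.support :=
  ⟨fun h => h p hp, fun h _ hq => (hT.existsUnique_path r j).unique hq hp ▸ h⟩

theorem OnPath.trans (hij : OnPath T r i j) (hjk : OnPath T r j k) : OnPath T r i k := by
  classical
  intro p hp
  have hj := hjk p hp
  exact p.support_takeUntil_subset_support hj (hij _ (hp.takeUntil hj))

theorem OnPath.total (hT : T.IsTree) (hik : OnPath T r i k) (hjk : OnPath T r j k) :
    OnPath T r i j ∨ OnPath T r j i := by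
  classical
  obtain ⟨p, hp, -⟩ := hT.existsUnique_path r k
  have hi := hik p hp
  have hj := hjk p hp
  rw [onPath_iff_mem_support hT (hp.takeUntil hj), onPath_iff_mem_support hT (hp.takeUntil hi)]
  rcases List.prefix_or_prefix_of_prefix (p.support_takeUntil_prefix_support hi)
    (p.support_takeUntil_prefix_support hj) with h | h
  · exact Or.inl (h.subset (Walk.end_mem_support _))
  · exact Or.inr (h.subset (Walk.end_mem_support _))

theorem OnPath.dist_add_dist (hT : T.IsTree) (h : OnPath T r i j) :
    T.dist r i + T.dist i j = T.dist r j := by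
  classical
  obtain ⟨p, hp, -⟩ := hT.existsUnique_path r j
  have hi := h p hp
  rw [← hT.length_eq_dist (hp.takeUntil hi), ← hT.length_eq_dist (hp.dropUntil hi),
    ← hT.length_eq_dist hp, ← Walk.length_append, p.take_spec hi]

theorem OnPath.dist_le (hT : T.IsTree) (h : OnPath T r i j) : T.dist r i ≤ T.dist r j :=
  (h.dist_add_dist hT).symm ▸ Nat.le_add_right _ _

theorem OnPath.eq_of_dist_le (hT : T.IsTree) (h : OnPath T r i j)
    (hle : T.dist r j ≤ T.dist r i) : i = j := by
  have := h.dist_add_dist hT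
  exact (hT.connected.preconnected i j).dist_eq_zero_iff.mp (by omega)

theorem OnPath.antisymm (hT : T.IsTree) (hij : OnPath T r i j) (hji : OnPath T r j i) : i = j :=
  hij.eq_of_dist_le hT (hji.dist_le hT)

theorem onPath_or_onPath_of_adj (hT : T.IsTree) (hij : T.Adj i j) :
    OnPath T r i j ∨ OnPath T r j i := by
  obtain ⟨p, hp, -⟩ := hT.existsUnique_path r j
  by_cases hi : i ∈ p.support
  · exact Or.inl ((onPath_iff_mem_support hT hp).mpr hi)
  · exact Or.inr ((onPath_iff_mem_support hT (hp.concat hi hij.symm)).mpr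
      (p.support_subset_support_concat _ p.end_mem_support))

theorem eq_or_eq_of_adj_of_onPath (hT : T.IsTree) (hij : T.Adj i j) (hi : OnPath T r i j)
    (hik : OnPath T r i k) (hkj : OnPath T r k j) : k = i ∨ k = j := by
  have hdepth : T.dist r j = T.dist r i + 1 := by
    rw [← hi.dist_add_dist hT, dist_eq_one_iff_adj.mpr hij]
  rcases (hik.dist_le hT).eq_or_lt with h | h
  · exact Or.inl (hik.eq_of_dist_le hT h.ge).symm
  · exact Or.inr (hkj.eq_of_dist_le hT (by omega))

theorem onPath_of_induce_connected (hT : T.IsTree) {S : Set I} (hS : (T.induce S).Connected)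
    (hi : i ∈ S) (hpar : ∀ p, IsParent T r p i → p ∉ S) (hj : j ∈ S) : OnPath T r i j := by
  have step : ∀ x y : S, T.Adj x y → OnPath T r i x → OnPath T r i y := by
    intro x y hxy hix
    rcases onPath_or_onPath_of_adj hT hxy with hxy' | hyx
    · exact hix.trans hxy'
    rcases hix.total hT hyx with hiy | hyi
    · exact hiy
    -- `y` is the parent of `x`, so `i`, squeezed between them, is `y` or has parent `y ∈ S`
    rcases eq_or_eq_of_adj_of_onPath hT hxy.symm hyx hyi hix with h | h
    · exact h ▸ onPath_refl T r i
    · exact absurd y.2 (hpar y ⟨h ▸ hxy.symm, hyi⟩)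
  suffices ∀ y : S, Relation.ReflTransGen (T.induce S).Adj ⟨i, hi⟩ y → OnPath T r i y from
    this ⟨j, hj⟩ ((reachable_iff_reflTransGen _ _).mp (hS.preconnected _ _))
  intro y hy
  induction hy with
  | refl => exact onPath_refl T r i
  | tail _ hadj ih => exact step _ _ hadj ih

end OnPath

section ForgetBag

variable {V A I : Type*} {src tgt : A → V} {T : SimpleGraph I} {β : I → Finset V} {r : I}

theorem IsForgetBag.onPath (hTD : IsTreeDecomp src tgt T β) {v : V} {i m : I}
    (hfb : IsForgetBag T r β v i) (hm : v ∈ β m) : OnPath T r i m :=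
  onPath_of_induce_connected hTD.isTree (hTD.bagConn v) hfb.2.1 hfb.2.2 hm

theorem IsForgetBag.unique (hTD : IsTreeDecomp src tgt T β) {v : V} {i i' : I}
    (h : IsForgetBag T r β v i) (h' : IsForgetBag T r β v i') : i = i' :=
  (h.onPath hTD h'.2.1).antisymm hTD.isTree (h'.onPath hTD h.2.1)

theorem IsTreeDecomp.exists_bag_of_joinedByArc (hTD : IsTreeDecomp src tgt T β) {u w : V}
    (h : JoinedByArc src tgt u w) : ∃ k, u ∈ β k ∧ w ∈ β k := by
  obtain ⟨a, ⟨rfl, rfl⟩ | ⟨rfl, rfl⟩⟩ := h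
  · exact hTD.bagA a
  · exact (hTD.bagA a).imp fun _ => And.symm

theorem IsForgetBag.onPath_of_joinedByArc (hTD : IsTreeDecomp src tgt T β) {b c : V}
    {i ib ic : I} (hib : IsForgetBag T r β b ib) (hic : IsForgetBag T r β c ic)
    (hbc : JoinedByArc src tgt b c) (hi : OnPath T r i ib) (hdist : T.dist r i ≤ T.dist r ic) :
    OnPath T r i ic := by
  obtain ⟨k, hbk, hck⟩ := hTD.exists_bag_of_joinedByArc hbc
  rcases (hi.trans (hib.onPath hTD hbk)).total hTD.isTree (hic.onPath hTD hck) with h | h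
  · exact h
  · exact (h.eq_of_dist_le hTD.isTree hdist).symm ▸ onPath_refl T r i

theorem exists_forgetBag_onPath_forgetBag (hTD : IsTreeDecomp src tgt T β) {W : Set V}
    (hW : W.Nonempty)
    (hconn : ∀ x ∈ W, ∀ y ∈ W,
      Relation.ReflTransGen (fun u w => u ∈ W ∧ w ∈ W ∧ JoinedByArc src tgt u w) x y)
    (hfb : ∀ w ∈ W, ∃ i, IsForgetBag T r β w i) :
    ∃ w ∈ W, ∃ iw, IsForgetBag T r β w iw ∧
      ∀ v ∈ W, ∀ iv, IsForgetBag T r β v iv → OnPath T r iw iv := by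
  classical
  have hex : ∃ n, ∃ w ∈ W, ∃ i, IsForgetBag T r β w i ∧ T.dist r i = n := by
    obtain ⟨w, hw⟩ := hW
    obtain ⟨i, hi⟩ := hfb w hw
    exact ⟨_, w, hw, i, hi, rfl⟩
  obtain ⟨w, hw, iw, hiw, hdepth⟩ := Nat.find_spec hex
  have hmin : ∀ v ∈ W, ∀ iv, IsForgetBag T r β v iv → T.dist r iw ≤ T.dist r iv :=
    fun v hv iv hiv => hdepth ▸ Nat.find_min' hex ⟨v, hv, iv, hiv, rfl⟩
  refine ⟨w, hw, iw, hiw, fun v hv => ?_⟩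
  induction hconn w hw v hv with
  | refl => exact fun iv hiv => hiw.unique hTD hiv ▸ onPath_refl T r iw
  | tail _ hbc ih =>
    obtain ⟨hb, hc, hjoin⟩ := hbc
    obtain ⟨ib, hib⟩ := hfb _ hb
    exact fun iv hiv => hib.onPath_of_joinedByArc hTD hiv hjoin (ih hb ib hib) (hmin _ hc iv hiv)

end ForgetBag

theorem exists_min_forgetBag_of_connected_general {V A I : Type*}
    (src tgt : A → V) (T : SimpleGraph I) (β : I → Finset V) (r : I)
    (hTD : IsTreeDecomp src tgt T β)
    (W : Set V) (hW : W.Nonempty)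
    (hconn : ∀ x ∈ W, ∀ y ∈ W,
      Relation.ReflTransGen (fun u w => u ∈ W ∧ w ∈ W ∧ JoinedByArc src tgt u w) x y) :
    ∃ w ∈ W, ∀ v ∈ W, ∀ iw iv : I,
      IsForgetBag T r β w iw → IsForgetBag T r β v iv → OnPath T r iw iv := by
  by_cases hfb : ∀ w ∈ W, ∃ i, IsForgetBag T r β w i
  · obtain ⟨w, hw, iw, hiw, hmin⟩ := exists_forgetBag_onPath_forgetBag hTD hW hconn hfb
    exact ⟨w, hw, fun v hv iw' iv hiw' hiv => hiw'.unique hTD hiw ▸ hmin v hv iv hiv⟩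
  · simp only [not_forall, not_exists] at hfb
    obtain ⟨w, hw, hnone⟩ := hfb
    exact ⟨w, hw, fun _ _ iw _ hiw => absurd hiw (hnone iw)⟩

/-- **Footnote claim.** Let `W` be a nonempty set of vertices that is connected in the
underlying undirected multigraph: any two vertices of `W` are connected by a sequence
of vertices of `W` in which consecutive vertices are joined by arcs.  Then there is a
vertex `w ∈ W` whose forget bag lies on the unique path from the root to the forget
bag of every vertex of `W`. -/
theorem exists_min_forgetBag_of_connected {V A I : Type*}
    [Fintype V] [Fintype A] [Fintype I]
    (src tgt : A → V) (T : SimpleGraph I) (β : I → Finset V) (r : I)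
    (hTD : IsTreeDecomp src tgt T β) (hroot : β r = ∅)
    (W : Set V) (hW : W.Nonempty)
    (hconn : ∀ x ∈ W, ∀ y ∈ W,
      Relation.ReflTransGen (fun u w => u ∈ W ∧ w ∈ W ∧ JoinedByArc src tgt u w) x y) :
    ∃ w ∈ W, ∀ v ∈ W, ∀ iw iv : I,
      IsForgetBag T r β w iw → IsForgetBag T r β v iv → OnPath T r iw iv :=
  exists_min_forgetBag_of_connected_general src tgt T β r hTD W hW hconn
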